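/- Assume the standard scarred-sequence setting and suppose additionally given, for each N, a subset L_N ⊆ I_N such that the supports X_{N,i} for i ∈ L_N are pairwise disjoint. Then ‖(Σ_{i∈L_N} P_{N,i}) A_N‖ → 0 as N → ∞. -/

import Mathlib

/-!
Projectors with disjoint supports commute, so for two non-overlapping terms the cross term
`re ⟪P i A, P j A⟫ = ‖P j (P i A)‖²` is nonnegative. Expanding `‖∑ i ∈ L, P i A‖²` over a set `L`
that is independent in the overlap graph of the supports therefore gives at most the sum of the
cross terms over all non-overlapping pairs, i.e. `‖∑ i, P i A‖²` minus the overlapping cross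
terms. Each of those is at least `-(‖P i A‖² + ‖P j A‖²) / 2`, every index overlaps at most `C`
others, and `∑ i, ‖P i A‖² = re ⟪A, ∑ i, P i A⟫ ≤ ‖∑ i, P i A‖`. Hence with
`η = ‖∑ i, P i A‖ → 0` we get `‖∑ i ∈ L, P i A‖² ≤ η² + C η → 0`.
-/

open Filter
open scoped BigOperators

noncomputable section

/-- The `M`-qudit space: complex functions on configurations `Fin M → Fin d`,
with the standard (Euclidean) inner product. -/
abbrev QuditSpace (d M : ℕ) : Type := EuclideanSpace ℂ (Fin M → Fin d)

/-- The computational basis vector indexed by the configuration `s`. -/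
def basisVec {d M : ℕ} (s : Fin M → Fin d) : QuditSpace d M :=
  EuclideanSpace.single s 1

/-- The matrix element `⟨e_s, T e_t⟩` of an operator `T` on the qudit space. -/
def matElem {d M : ℕ} (T : QuditSpace d M →L[ℂ] QuditSpace d M)
    (s t : Fin M → Fin d) : ℂ :=
  inner ℂ (basisVec s) (T (basisVec t))

/-- `T` is supported on the set of sites `X`: its matrix elements vanish whenever the two
configurations differ at a site outside `X`, and (among configuration pairs agreeing
outside `X`) they depend only on the restrictions of the configurations to `X`. -/
def SupportedOn {d M : ℕ} (X : Finset (Fin M))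
    (T : QuditSpace d M →L[ℂ] QuditSpace d M) : Prop :=
  (∀ s t : Fin M → Fin d, (∃ j ∉ X, s j ≠ t j) → matElem T s t = 0) ∧
  (∀ s t s' t' : Fin M → Fin d,
      (∀ j ∈ X, s j = s' j) → (∀ j ∈ X, t j = t' j) →
      (∀ j ∉ X, s j = t j) → (∀ j ∉ X, s' j = t' j) →
      matElem T s t = matElem T s' t')

/-- An orthogonal projection: a self-adjoint idempotent operator. -/
def IsOrthProj {d M : ℕ} (P : QuditSpace d M →L[ℂ] QuditSpace d M) : Prop :=
  (∀ v w : QuditSpace d M, (inner ℂ (P v) w : ℂ) = inner ℂ v (P w)) ∧ P ∘L P = P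

open Finset RCLike
open scoped InnerProductSpace

theorem SimpleGraph.sum_sum_ite_adj_add {ι R : Type*} [Fintype ι] [CommSemiring R]
    (G : SimpleGraph ι) [DecidableRel G.Adj] (a : ι → R) :
    ∑ i, ∑ j, (if G.Adj i j then a i + a j else 0) = 2 * ∑ i, G.degree i * a i := by
  have hleft : ∑ i, ∑ j, (if G.Adj i j then a i else 0) = ∑ i, G.degree i * a i := by
    refine sum_congr rfl fun i _ => ?_
    rw [← sum_filter, sum_const, ← G.neighborFinset_eq_filter, G.card_neighborFinset_eq_degree,
      nsmul_eq_mul]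
  have hright : ∑ i, ∑ j, (if G.Adj i j then a j else 0) = ∑ i, G.degree i * a i := by
    rw [sum_comm, ← hleft]
    simp_rw [G.adj_comm]
  simp_rw [ite_add_zero, sum_add_distrib, hleft, hright, two_mul]

section
variable {𝕜 E : Type*} [RCLike 𝕜] [SeminormedAddCommGroup E] [InnerProductSpace 𝕜 E]

theorem norm_sum_sq_eq_sum_sum_re_inner {ι : Type*} (s : Finset ι) (v : ι → E) :
    ‖∑ i ∈ s, v i‖ ^ 2 = ∑ i ∈ s, ∑ j ∈ s, re ⟪v i, v j⟫_𝕜 := by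
  rw [← inner_self_eq_norm_sq (𝕜 := 𝕜), sum_inner, map_sum]
  simp_rw [inner_sum, map_sum]

theorem neg_re_inner_le_norm_sq_add {x y : E} : -(2 * re ⟪x, y⟫_𝕜) ≤ ‖x‖ ^ 2 + ‖y‖ ^ 2 := by
  have := neg_le_of_abs_le ((abs_re_le_norm _).trans (norm_inner_le_norm (𝕜 := 𝕜) x y))
  nlinarith [two_mul_le_add_sq ‖x‖ ‖y‖]

theorem norm_sum_sq_le_of_isIndepSet {ι : Type*} [Fintype ι] (G : SimpleGraph ι)
    [DecidableRel G.Adj] {C : ℕ} (hdeg : ∀ i, G.degree i ≤ C) {v : ι → E}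
    (hv : ∀ i j, ¬G.Adj i j → 0 ≤ re ⟪v i, v j⟫_𝕜) {L : Finset ι} (hL : G.IsIndepSet L) :
    ‖∑ i ∈ L, v i‖ ^ 2 ≤ ‖∑ i, v i‖ ^ 2 + C * ∑ i, ‖v i‖ ^ 2 := by
  set f : ι → ι → ℝ := fun i j => re ⟪v i, v j⟫_𝕜
  have hLnonadj : ∀ i ∈ L, ∀ j ∈ L, ¬G.Adj i j := fun i hi j hj hij => hL hi hj hij.ne hij
  have hnonadj_nonneg : ∀ i j, 0 ≤ if G.Adj i j then 0 else f i j := fun i j => by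
    split_ifs with h
    exacts [le_rfl, hv i j h]
  have hadj : ∑ i, ∑ j, (if G.Adj i j then -f i j else 0) ≤ ∑ i, G.degree i * ‖v i‖ ^ 2 := by
    have htwice : ∑ i, ∑ j, 2 * (if G.Adj i j then -f i j else 0)
        ≤ ∑ i, ∑ j, (if G.Adj i j then ‖v i‖ ^ 2 + ‖v j‖ ^ 2 else 0) :=
      sum_le_sum fun i _ => sum_le_sum fun j _ => by
        split_ifs
        · linarith [neg_re_inner_le_norm_sq_add (𝕜 := 𝕜) (x := v i) (y := v j)]
        · simp
    rw [G.sum_sum_ite_adj_add] at htwice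
    simp_rw [← mul_sum] at htwice
    linarith
  have htotal : ‖∑ i, v i‖ ^ 2 = ∑ i, ∑ j, (if G.Adj i j then 0 else f i j)
      - ∑ i, ∑ j, (if G.Adj i j then -f i j else 0) := by
    rw [norm_sum_sq_eq_sum_sum_re_inner (𝕜 := 𝕜), ← sum_sub_distrib]
    refine sum_congr rfl fun i _ => ?_
    rw [← sum_sub_distrib]
    exact sum_congr rfl fun j _ => by split_ifs <;> simp [f]
  calc ‖∑ i ∈ L, v i‖ ^ 2 = ∑ i ∈ L, ∑ j ∈ L, (if G.Adj i j then 0 else f i j) := by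
        rw [norm_sum_sq_eq_sum_sum_re_inner (𝕜 := 𝕜)]
        exact sum_congr rfl fun i hi => sum_congr rfl fun j hj => by simp [f, hLnonadj i hi j hj]
    _ ≤ ∑ i, ∑ j, (if G.Adj i j then 0 else f i j) := by
        refine (sum_le_sum fun i _ => sum_le_univ_sum_of_nonneg (hnonadj_nonneg i)).trans ?_
        exact sum_le_univ_sum_of_nonneg fun i => sum_nonneg fun j _ => hnonadj_nonneg i j
    _ ≤ ‖∑ i, v i‖ ^ 2 + ∑ i, G.degree i * ‖v i‖ ^ 2 := by linarith
    _ ≤ ‖∑ i, v i‖ ^ 2 + C * ∑ i, ‖v i‖ ^ 2 := by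
        rw [mul_sum]
        gcongr with i
        exact_mod_cast hdeg i
end

section
variable {𝕜 E : Type*} [RCLike 𝕜] [NormedAddCommGroup E] [InnerProductSpace 𝕜 E] [CompleteSpace E]

theorem IsStarProjection.re_inner_self_apply {p : E →L[𝕜] E} (hp : IsStarProjection p) (x : E) :
    re ⟪x, p x⟫_𝕜 = ‖p x‖ ^ 2 := by
  have hsym : ⟪x, p (p x)⟫_𝕜 = ⟪p x, p x⟫_𝕜 := by
    rw [← ContinuousLinearMap.adjoint_inner_left, ← ContinuousLinearMap.star_eq_adjoint,
      hp.isSelfAdjoint.star_eq]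
  rw [← mul_apply_eq_comp, hp.isIdempotentElem.eq] at hsym
  rw [hsym, inner_self_eq_norm_sq]

theorem IsStarProjection.re_inner_apply_apply_nonneg {p q : E →L[𝕜] E} (hp : IsStarProjection p)
    (hq : IsStarProjection q) (hpq : Commute p q) (x : E) : 0 ≤ re ⟪p x, q x⟫_𝕜 := by
  rw [← ContinuousLinearMap.adjoint_inner_right, ← ContinuousLinearMap.star_eq_adjoint,
    hp.isSelfAdjoint.star_eq, ← mul_apply_eq_comp]
  exact (ContinuousLinearMap.IsPositive.of_isStarProjection (hp.mul hq hpq)).re_inner_nonneg_right x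

theorem sum_norm_sq_apply_le_of_isStarProjection {ι : Type*} (s : Finset ι) {p : ι → E →L[𝕜] E}
    (hp : ∀ i ∈ s, IsStarProjection (p i)) (x : E) :
    ∑ i ∈ s, ‖p i x‖ ^ 2 ≤ ‖x‖ * ‖(∑ i ∈ s, p i) x‖ := by
  calc ∑ i ∈ s, ‖p i x‖ ^ 2 = re ⟪x, (∑ i ∈ s, p i) x⟫_𝕜 := by
        rw [_root_.sum_apply, inner_sum, map_sum]
        exact sum_congr rfl fun i hi => ((hp i hi).re_inner_self_apply x).symm
    _ ≤ ‖x‖ * ‖(∑ i ∈ s, p i) x‖ := re_inner_le_norm _ _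

theorem norm_sum_apply_sq_le_of_isIndepSet {ι : Type*} [Fintype ι] (G : SimpleGraph ι)
    [DecidableRel G.Adj] {C : ℕ} (hdeg : ∀ i, G.degree i ≤ C) {p : ι → E →L[𝕜] E}
    (hp : ∀ i, IsStarProjection (p i)) (hcomm : ∀ i j, ¬G.Adj i j → Commute (p i) (p j))
    {L : Finset ι} (hL : G.IsIndepSet L) (x : E) :
    ‖(∑ i ∈ L, p i) x‖ ^ 2 ≤ ‖(∑ i, p i) x‖ ^ 2 + C * (‖x‖ * ‖(∑ i, p i) x‖) := by
  have hsum := sum_norm_sq_apply_le_of_isStarProjection univ (fun i _ => hp i) x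
  have hvec := norm_sum_sq_le_of_isIndepSet G hdeg
    (fun i j h => (hp i).re_inner_apply_apply_nonneg (hp j) (hcomm i j h) x) hL
  calc ‖(∑ i ∈ L, p i) x‖ ^ 2 = ‖∑ i ∈ L, p i x‖ ^ 2 := by rw [_root_.sum_apply]
    _ ≤ ‖∑ i, p i x‖ ^ 2 + C * ∑ i, ‖p i x‖ ^ 2 := hvec
    _ ≤ ‖(∑ i, p i) x‖ ^ 2 + C * (‖x‖ * ‖(∑ i, p i) x‖) := by
        rw [← _root_.sum_apply]
        gcongr

end

section Qudit
variable {d M : ℕ}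

theorem basisVec_eq_basisFun (s : Fin M → Fin d) :
    basisVec s = EuclideanSpace.basisFun (Fin M → Fin d) ℂ s := by
  rw [EuclideanSpace.basisFun_apply, basisVec]

theorem matElem_comp (P Q : QuditSpace d M →L[ℂ] QuditSpace d M) (s t : Fin M → Fin d) :
    matElem (P ∘L Q) s t = ∑ u, matElem P s u * matElem Q u t := by
  simp only [matElem, basisVec_eq_basisFun, ContinuousLinearMap.comp_apply]
  conv_lhs => rw [← (EuclideanSpace.basisFun _ ℂ).sum_repr' (Q _), map_sum, inner_sum]
  simp_rw [map_smul, inner_smul_right, mul_comm]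

theorem ext_matElem {P Q : QuditSpace d M →L[ℂ] QuditSpace d M}
    (h : ∀ s t, matElem P s t = matElem Q s t) : P = Q := by
  let b := (EuclideanSpace.basisFun (Fin M → Fin d) ℂ).toBasis
  refine ContinuousLinearMap.coe_injective <| b.ext fun t =>
    InnerProductSpace.ext_inner_left_basis b fun s => ?_
  simpa [b, matElem, basisVec_eq_basisFun] using h s t

variable {X Y : Finset (Fin M)} {P Q : QuditSpace d M →L[ℂ] QuditSpace d M}

theorem SupportedOn.matElem_eq_zero (hP : SupportedOn X P) {s t : Fin M → Fin d} {j : Fin M}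
    (hj : j ∉ X) (hst : s j ≠ t j) : matElem P s t = 0 :=
  hP.1 s t ⟨j, hj, hst⟩

theorem matElem_comp_of_disjoint (hXY : Disjoint X Y) (hP : SupportedOn X P)
    (hQ : SupportedOn Y Q) (s t : Fin M → Fin d) :
    matElem (P ∘L Q) s t = matElem P s (X.piecewise t s) * matElem Q (X.piecewise t s) t := by
  rw [matElem_comp, sum_eq_single (X.piecewise t s) _ (by simp)]
  intro u _ hu
  obtain ⟨j, hj⟩ := Function.ne_iff.mp hu
  by_cases hjX : j ∈ X
  · rw [X.piecewise_eq_of_mem _ _ hjX] at hj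
    rw [hQ.matElem_eq_zero (disjoint_left.mp hXY hjX) hj, mul_zero]
  · rw [X.piecewise_eq_of_notMem _ _ hjX] at hj
    rw [hP.matElem_eq_zero hjX (Ne.symm hj), zero_mul]

theorem SupportedOn.matElem_piecewise (hP : SupportedOn X P) (hXY : Disjoint X Y)
    {s t : Fin M → Fin d} (hst : ∀ j, j ∉ X → j ∉ Y → s j = t j) :
    matElem P s (X.piecewise t s) = matElem P (Y.piecewise t s) t := by
  apply hP.2
  · intro j hj
    rw [Y.piecewise_eq_of_notMem _ _ (disjoint_left.mp hXY hj)]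
  · intro j hj
    rw [X.piecewise_eq_of_mem _ _ hj]
  · intro j hj
    rw [X.piecewise_eq_of_notMem _ _ hj]
  · intro j hj
    by_cases hjY : j ∈ Y
    · rw [Y.piecewise_eq_of_mem _ _ hjY]
    · rw [Y.piecewise_eq_of_notMem _ _ hjY, hst j hj hjY]

theorem SupportedOn.commute_of_disjoint (hXY : Disjoint X Y) (hP : SupportedOn X P)
    (hQ : SupportedOn Y Q) : Commute P Q := by
  refine ext_matElem fun s t => ?_
  rw [ContinuousLinearMap.mul_def, ContinuousLinearMap.mul_def,
    matElem_comp_of_disjoint hXY hP hQ, matElem_comp_of_disjoint hXY.symm hQ hP]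
  by_cases hst : ∀ j, j ∉ X → j ∉ Y → s j = t j
  · rw [hP.matElem_piecewise hXY hst,
      ← hQ.matElem_piecewise hXY.symm fun j hjY hjX => hst j hjX hjY, mul_comm]
  · push Not at hst
    obtain ⟨j, hjX, hjY, hj⟩ := hst
    rw [hQ.matElem_eq_zero (s := X.piecewise t s) hjY (by rwa [X.piecewise_eq_of_notMem _ _ hjX]),
      hP.matElem_eq_zero (s := Y.piecewise t s) hjX (by rwa [Y.piecewise_eq_of_notMem _ _ hjY]),
      mul_zero, mul_zero]

end Qudit

theorem IsOrthProj.isStarProjection {d M : ℕ} {P : QuditSpace d M →L[ℂ] QuditSpace d M}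
    (hP : IsOrthProj P) : IsStarProjection P :=
  ⟨hP.2, ContinuousLinearMap.isSelfAdjoint_iff_isSymmetric.mpr hP.1⟩

def overlapGraph {ι α : Type*} (X : ι → Finset α) : SimpleGraph ι where
  Adj i j := i ≠ j ∧ ¬Disjoint (X i) (X j)
  symm := ⟨fun _ _ h => ⟨h.1.symm, fun hd => h.2 hd.symm⟩⟩
  loopless := ⟨fun _ h => h.1 rfl⟩

section OverlapGraph
variable {ι α : Type*} {X : ι → Finset α}

@[simp]
theorem overlapGraph_adj {i j : ι} :
    (overlapGraph X).Adj i j ↔ i ≠ j ∧ ¬Disjoint (X i) (X j) :=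
  Iff.rfl

instance [DecidableEq ι] [DecidableEq α] : DecidableRel (overlapGraph X).Adj :=
  fun i j => inferInstanceAs (Decidable (i ≠ j ∧ ¬Disjoint (X i) (X j)))

theorem degree_overlapGraph [Fintype ι] [DecidableEq ι] [DecidableEq α] (i : ι) :
    (overlapGraph X).degree i = (univ.filter fun i' => i' ≠ i ∧ (X i ∩ X i').Nonempty).card := by
  rw [← SimpleGraph.card_neighborFinset_eq_degree, SimpleGraph.neighborFinset_eq_filter]
  congr 1
  ext i'
  simp [not_disjoint_iff_nonempty_inter, ne_comm]

theorem isIndepSet_overlapGraph {L : Finset ι}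
    (hL : ∀ i ∈ L, ∀ i' ∈ L, i ≠ i' → Disjoint (X i) (X i')) :
    (overlapGraph X).IsIndepSet L :=
  fun i hi j hj hij h => (overlapGraph_adj.mp h).2 (hL i hi j hj hij)

end OverlapGraph

theorem commute_of_not_overlapGraph_adj {d M : ℕ} {ι : Type*} {X : ι → Finset (Fin M)}
    {P : ι → QuditSpace d M →L[ℂ] QuditSpace d M} (hP : ∀ i, SupportedOn (X i) (P i)) {i j : ι}
    (h : ¬(overlapGraph X).Adj i j) : Commute (P i) (P j) := by
  obtain rfl | hij := eq_or_ne i j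
  · exact Commute.refl _
  · exact (hP i).commute_of_disjoint (by simpa [hij] using h) (hP j)

theorem layer_asymptotically_annihilates_general
    (d C : ℕ)
    (M : ℕ → ℕ) (I : ℕ → Type) [∀ N, Fintype (I N)] [∀ N, DecidableEq (I N)]
    (X : ∀ N, I N → Finset (Fin (M N)))
    (P : ∀ N, (i : I N) → QuditSpace d (M N) →L[ℂ] QuditSpace d (M N))
    (A : ∀ N, QuditSpace d (M N))
    (hC : ∀ N (i : I N),
      (Finset.univ.filter fun i' : I N => i' ≠ i ∧ (X N i ∩ X N i').Nonempty).card ≤ C)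
    (hproj : ∀ N (i : I N), IsOrthProj (P N i))
    (hsupp : ∀ N (i : I N), SupportedOn (X N i) (P N i))
    (hA : ∀ N, ‖A N‖ = 1)
    (hlim : Tendsto (fun N => ‖(∑ i : I N, P N i) (A N)‖) atTop (nhds 0))
    (L : ∀ N, Finset (I N))
    (hLdisj : ∀ N, ∀ i ∈ L N, ∀ i' ∈ L N, i ≠ i' → Disjoint (X N i) (X N i')) :
    Tendsto (fun N => ‖(∑ i ∈ L N, P N i) (A N)‖) atTop (nhds 0) := by
  have hbound : ∀ N, ‖(∑ i ∈ L N, P N i) (A N)‖ ^ 2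
      ≤ ‖(∑ i, P N i) (A N)‖ ^ 2 + C * ‖(∑ i, P N i) (A N)‖ := fun N => by
    simpa [hA N] using norm_sum_apply_sq_le_of_isIndepSet (overlapGraph (X N))
      (fun i => (degree_overlapGraph i).trans_le (hC N i)) (fun i => (hproj N i).isStarProjection)
      (fun _ _ => commute_of_not_overlapGraph_adj (hsupp N)) (isIndepSet_overlapGraph (hLdisj N))
      (A N)
  have hmajorant : Tendsto (fun N => √(‖(∑ i, P N i) (A N)‖ ^ 2 + C * ‖(∑ i, P N i) (A N)‖))
      atTop (nhds 0) := by
    simpa using ((hlim.pow 2).add (hlim.const_mul (C : ℝ))).sqrt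
  exact squeeze_zero (fun N => norm_nonneg _) (fun N => Real.le_sqrt_of_sq_le (hbound N)) hmajorant

/-- The intermediate claim in the proof of Proposition 2 of the paper (standard
scarred-sequence setting): a single circuit layer, i.e. a sum of the projectors `P_{N,i}` over
a set `L_N` of indices with pairwise disjoint supports, asymptotically annihilates `A_N`. -/
theorem layer_asymptotically_annihilates
    (d K C : ℕ) (hd : 2 ≤ d)
    (M : ℕ → ℕ) (I : ℕ → Type) [∀ N, Fintype (I N)] [∀ N, DecidableEq (I N)]
    (X : ∀ N, I N → Finset (Fin (M N)))
    (P : ∀ N, (i : I N) → QuditSpace d (M N) →L[ℂ] QuditSpace d (M N))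
    (A : ∀ N, QuditSpace d (M N))
    (hK : ∀ N (i : I N), (X N i).card ≤ K)
    (hC : ∀ N (i : I N),
      (Finset.univ.filter fun i' : I N => i' ≠ i ∧ (X N i ∩ X N i').Nonempty).card ≤ C)
    (hproj : ∀ N (i : I N), IsOrthProj (P N i))
    (hsupp : ∀ N (i : I N), SupportedOn (X N i) (P N i))
    (hA : ∀ N, ‖A N‖ = 1)
    (hlim : Tendsto (fun N => ‖(∑ i : I N, P N i) (A N)‖) atTop (nhds 0))
    (L : ∀ N, Finset (I N))
    (hLdisj : ∀ N, ∀ i ∈ L N, ∀ i' ∈ L N, i ≠ i' → Disjoint (X N i) (X N i')) :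
    Tendsto (fun N => ‖(∑ i ∈ L N, P N i) (A N)‖) atTop (nhds 0) :=
  layer_asymptotically_annihilates_general d C M I X P A hC hproj hsupp hA hlim L hLdisj
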